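/- For every integer q ≥ 1 and ε ∈ ℝ, with H(x, y, z) = ψ_q(x, y) + ε·(y·sin z − x·cos z), the Q-flow vector field v satisfies ι_v(dy ∧ dx ∧ dz) = dα_q: for every point of ℝ³ and all u, w ∈ ℝ³, −det[v, u, w] = ψ_q·(u₂w₁ − u₁w₂) − (⟨∇H, u⟩·w₃ − ⟨∇H, w⟩·u₃), where det[v, u, w] denotes the determinant of the 3×3 matrix with columns v, u, w (so dy ∧ dx ∧ dz = −dx ∧ dy ∧ dz is the chosen volume form). Consequently v preserves the Euclidean volume form. -/

import Mathlib

/-!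
The field is Hamiltonian in the horizontal variables: `v = (∂_y H, −∂_x H, ψ_q)`,
because the drift `ε (sin z, cos z)` is exactly the `(∂_y, −∂_x)`-gradient of
`ε (y sin z − x cos z)`. Expanding `det[v, u, w] = v · (u × w)` then gives the identity for the
2-form, the `∂_z H` terms cancelling. The divergence is `∂_x∂_y ψ_q − ∂_y∂_x ψ_q = 0`, which is
checked term by term on the plane waves making up `ψ_q`.
-/

/-- The stream function of Zaslavsky's Q-flow:
`ψ_q(x, y) = Σ_{j=1}^{q} cos(x cos(2πj/q) + y sin(2πj/q))`. -/
noncomputable def psi (q : ℕ) (x y : ℝ) : ℝ :=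
  ∑ j ∈ Finset.Icc 1 q,
    Real.cos (x * Real.cos (2 * Real.pi * j / q) + y * Real.sin (2 * Real.pi * j / q))

/-- The effective Hamiltonian of the Q-flow:
`H(x, y, z) = ψ_q(x, y) + ε (y sin z − x cos z)`. -/
noncomputable def Qham (q : ℕ) (ε : ℝ) (x y z : ℝ) : ℝ :=
  psi q x y + ε * (y * Real.sin z - x * Real.cos z)

open Real Finset

theorem neg_det_hamiltonian_field (Hx Hy Hz ψ : ℝ) (u w : Fin 3 → ℝ) :
    -(Matrix.det !![Hy, u 0, w 0; -Hx, u 1, w 1; ψ, u 2, w 2])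
      = ψ * (u 1 * w 0 - u 0 * w 1)
        - ((Hx * u 0 + Hy * u 1 + Hz * u 2) * w 2 - (Hx * w 0 + Hy * w 1 + Hz * w 2) * u 2) := by
  simp only [Matrix.det_fin_three, Matrix.of_apply, Matrix.cons_val', Matrix.cons_val_zero,
    Matrix.cons_val_fin_one, Matrix.cons_val_one, Matrix.cons_val]
  ring

noncomputable def planeWaveSum {ι : Type*} (s : Finset ι) (a b : ι → ℝ) (x y : ℝ) : ℝ :=
  ∑ j ∈ s, cos (x * a j + y * b j)

theorem psi_eq_planeWaveSum (q : ℕ) :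
    psi q = planeWaveSum (Icc 1 q) (fun j => cos (2 * π * j / q)) (fun j => sin (2 * π * j / q)) :=
  rfl

section PlaneWaveSum

variable {ι : Type*} (s : Finset ι) (a b : ι → ℝ) (x y : ℝ)

theorem hasDerivAt_planeWaveSum_fst :
    HasDerivAt (fun x' => planeWaveSum s a b x' y)
      (∑ j ∈ s, -sin (x * a j + y * b j) * a j) x :=
  HasDerivAt.fun_sum fun j _ =>
    (hasDerivAt_cos _).comp x ((hasDerivAt_mul_const (a j)).add_const _)

theorem hasDerivAt_planeWaveSum_snd :
    HasDerivAt (fun y' => planeWaveSum s a b x y')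
      (∑ j ∈ s, -sin (x * a j + y * b j) * b j) y :=
  HasDerivAt.fun_sum fun j _ =>
    (hasDerivAt_cos _).comp y ((hasDerivAt_mul_const (b j)).const_add _)

theorem deriv_deriv_planeWaveSum_snd_fst :
    deriv (fun x' => deriv (fun y' => planeWaveSum s a b x' y') y) x
      = ∑ j ∈ s, -cos (x * a j + y * b j) * a j * b j := by
  simp_rw [fun x' => (hasDerivAt_planeWaveSum_snd s a b x' y).deriv]
  refine (HasDerivAt.fun_sum fun j _ => ?_).deriv
  exact (((hasDerivAt_sin _).comp x ((hasDerivAt_mul_const (a j)).add_const _)).neg).mul_const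
    (b j) |>.congr_deriv (by ring)

theorem deriv_deriv_planeWaveSum_fst_snd :
    deriv (fun y' => deriv (fun x' => planeWaveSum s a b x' y') x) y
      = ∑ j ∈ s, -cos (x * a j + y * b j) * a j * b j := by
  simp_rw [fun y' => (hasDerivAt_planeWaveSum_fst s a b x y').deriv]
  refine (HasDerivAt.fun_sum fun j _ => ?_).deriv
  exact (((hasDerivAt_sin _).comp y ((hasDerivAt_mul_const (b j)).const_add _)).neg).mul_const
    (a j) |>.congr_deriv (by ring)

end PlaneWaveSum

theorem deriv_deriv_psi_comm (q : ℕ) (x y : ℝ) :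
    deriv (fun x' => deriv (fun y' => psi q x' y') y) x
      = deriv (fun y' => deriv (fun x' => psi q x' y') x) y := by
  rw [psi_eq_planeWaveSum, deriv_deriv_planeWaveSum_snd_fst, deriv_deriv_planeWaveSum_fst_snd]

theorem differentiableAt_psi_fst (q : ℕ) (x y : ℝ) :
    DifferentiableAt ℝ (fun x' => psi q x' y) x := by
  rw [psi_eq_planeWaveSum]
  exact (hasDerivAt_planeWaveSum_fst _ _ _ x y).differentiableAt

theorem differentiableAt_psi_snd (q : ℕ) (x y : ℝ) :
    DifferentiableAt ℝ (fun y' => psi q x y') y := by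
  rw [psi_eq_planeWaveSum]
  exact (hasDerivAt_planeWaveSum_snd _ _ _ x y).differentiableAt

section Qham

variable (q : ℕ) (ε x y z : ℝ)

theorem deriv_Qham_fst :
    deriv (fun x' => Qham q ε x' y z) x = deriv (fun x' => psi q x' y) x - ε * cos z := by
  have hdrift : HasDerivAt (fun x' => ε * (y * sin z - x' * cos z)) (ε * -cos z) x :=
    ((hasDerivAt_mul_const (cos z)).const_sub _).const_mul ε
  have hH : HasDerivAt (fun x' => Qham q ε x' y z) _ x :=
    (differentiableAt_psi_fst q x y).hasDerivAt.add hdrift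
  rw [hH.deriv]
  ring

theorem deriv_Qham_snd :
    deriv (fun y' => Qham q ε x y' z) y = deriv (fun y' => psi q x y') y + ε * sin z := by
  have hdrift : HasDerivAt (fun y' => ε * (y' * sin z - x * cos z)) (ε * sin z) y := by
    simpa using ((hasDerivAt_mul_const (sin z)).sub_const (x * cos z)).const_mul ε
  have hH : HasDerivAt (fun y' => Qham q ε x y' z) _ y :=
    (differentiableAt_psi_snd q x y).hasDerivAt.add hdrift
  exact hH.deriv

end Qham

theorem stmt16_general (q : ℕ) (ε : ℝ) (x y z : ℝ) :
    let Hx := deriv (fun s => Qham q ε s y z) x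
    let Hy := deriv (fun s => Qham q ε x s z) y
    let Hz := deriv (fun s => Qham q ε x y s) z
    let v1 := deriv (fun s => psi q x s) y + ε * Real.sin z
    let v2 := -(deriv (fun s => psi q s y) x) + ε * Real.cos z
    let v3 := psi q x y
    (∀ u w : Fin 3 → ℝ,
      -(Matrix.det !![v1, u 0, w 0; v2, u 1, w 1; v3, u 2, w 2])
        = psi q x y * (u 1 * w 0 - u 0 * w 1)
          - ((Hx * u 0 + Hy * u 1 + Hz * u 2) * w 2
              - (Hx * w 0 + Hy * w 1 + Hz * w 2) * u 2)) ∧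
    -- consequently v preserves the Euclidean volume form (divergence zero)
    (deriv (fun x' => deriv (fun y' => psi q x' y') y + ε * Real.sin z) x
      + deriv (fun y' => -(deriv (fun x' => psi q x' y') x) + ε * Real.cos z) y
      + deriv (fun _z' : ℝ => psi q x y) z = 0) := by
  intro Hx Hy Hz v1 v2 v3
  have hv1 : v1 = Hy := (deriv_Qham_snd q ε x y z).symm
  have hv2 : v2 = -Hx := by simp only [v2, Hx, deriv_Qham_fst]; ring
  refine ⟨fun u w => ?_, ?_⟩
  · rw [hv1, hv2]
    exact neg_det_hamiltonian_field Hx Hy Hz v3 u w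
  · rw [deriv_add_const, deriv_add_const, deriv.fun_neg, deriv_const, deriv_deriv_psi_comm]
    ring

/-- With `H(x, y, z) = ψ_q(x, y) + ε (y sin z − x cos z)`, the Q-flow vector
field `v` satisfies `ι_v (dy ∧ dx ∧ dz) = dα_q`: at every point and for all `u, w ∈ ℝ³`,
`−det[v, u, w] = ψ_q (u₂w₁ − u₁w₂) − (⟨∇H, u⟩ w₃ − ⟨∇H, w⟩ u₃)`, where `det[v, u, w]` is the
determinant of the matrix with columns `v, u, w`. Consequently `v` preserves the Euclidean
volume form (it is divergence free). -/
theorem stmt16 (q : ℕ) (hq : 1 ≤ q) (ε : ℝ) (x y z : ℝ) :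
    let Hx := deriv (fun s => Qham q ε s y z) x
    let Hy := deriv (fun s => Qham q ε x s z) y
    let Hz := deriv (fun s => Qham q ε x y s) z
    let v1 := deriv (fun s => psi q x s) y + ε * Real.sin z
    let v2 := -(deriv (fun s => psi q s y) x) + ε * Real.cos z
    let v3 := psi q x y
    (∀ u w : Fin 3 → ℝ,
      -(Matrix.det !![v1, u 0, w 0; v2, u 1, w 1; v3, u 2, w 2])
        = psi q x y * (u 1 * w 0 - u 0 * w 1)
          - ((Hx * u 0 + Hy * u 1 + Hz * u 2) * w 2
              - (Hx * w 0 + Hy * w 1 + Hz * w 2) * u 2)) ∧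
    -- consequently v preserves the Euclidean volume form (divergence zero)
    (deriv (fun x' => deriv (fun y' => psi q x' y') y + ε * Real.sin z) x
      + deriv (fun y' => -(deriv (fun x' => psi q x' y') x) + ε * Real.cos z) y
      + deriv (fun _z' : ℝ => psi q x y) z = 0) :=
  stmt16_general q ε x y z
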